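/- arXiv:1904.10945 — 7 statements merged into one kernel-verified Lean document; each statement's English description precedes it below -/
import Mathlib

section
/- For every vector v ∈ ℝ^N, ‖Pv‖_D ≤ ‖v‖_D, where ‖x‖_D := √(xᵀDx). -/
open Matrix BigOperators

/-- For every vector `v ∈ ℝ^N`, `‖Pv‖_D ≤ ‖v‖_D`, where
`‖x‖_D := √(xᵀ D x)`, `P` is row-stochastic with stationary distribution `d` and
`D = diag(d)`. -/
theorem stochastic_matrix_nonexpansive_in_D_norm
    (N : ℕ) (hN : 0 < N)
    (P : Matrix (Fin N) (Fin N) ℝ) (d : Fin N → ℝ)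
    (hPnonneg : ∀ i j, 0 ≤ P i j)
    (hProw : ∀ i, ∑ j, P i j = 1)
    (hdpos : ∀ s, 0 < d s)
    (hdsum : ∑ s, d s = 1)
    (hstat : Matrix.vecMul d P = d)
    (v : Fin N → ℝ) :
    Real.sqrt (P.mulVec v ⬝ᵥ (Matrix.diagonal d).mulVec (P.mulVec v)) ≤
      Real.sqrt (v ⬝ᵥ (Matrix.diagonal d).mulVec v) := by
  apply Real.sqrt_le_sqrt
  have hL : P.mulVec v ⬝ᵥ (Matrix.diagonal d).mulVec (P.mulVec v)
      = ∑ i, d i * (P.mulVec v i) ^ 2 := by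
    simp only [dotProduct, mulVec_diagonal]
    exact Finset.sum_congr rfl fun i _ => by ring
  have hR : v ⬝ᵥ (Matrix.diagonal d).mulVec v = ∑ j, d j * (v j) ^ 2 := by
    simp only [dotProduct, mulVec_diagonal]
    exact Finset.sum_congr rfl fun i _ => by ring
  rw [hL, hR]
  have key : ∀ i, (P.mulVec v i) ^ 2 ≤ ∑ j, P i j * (v j) ^ 2 := by
    intro i
    have h := Finset.sum_sq_le_sum_mul_sum_of_sq_eq_mul Finset.univ
      (r := fun j => P i j * v j) (f := fun j => P i j) (g := fun j => P i j * (v j) ^ 2)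
      (fun j _ => hPnonneg i j)
      (fun j _ => mul_nonneg (hPnonneg i j) (sq_nonneg _))
      (fun j _ => by ring)
    simpa [mulVec, dotProduct, hProw i] using h
  calc ∑ i, d i * (P.mulVec v i) ^ 2
      ≤ ∑ i, d i * ∑ j, P i j * (v j) ^ 2 := by
        apply Finset.sum_le_sum
        intro i _
        exact mul_le_mul_of_nonneg_left (key i) (hdpos i).le
    _ = ∑ j, (∑ i, d i * P i j) * (v j) ^ 2 := by
        simp_rw [Finset.mul_sum, Finset.sum_mul]
        rw [Finset.sum_comm]
        exact Finset.sum_congr rfl fun j _ => Finset.sum_congr rfl fun i _ => by ring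
    _ = ∑ j, d j * (v j) ^ 2 := by
        refine Finset.sum_congr rfl fun j _ => ?_
        have : ∑ i, d i * P i j = d j := by
          have := congrFun hstat j
          simpa [vecMul, dotProduct] using this
        rw [this]
end

section
/- For every complex scalar s with |s| ≤ 1 and every γ ∈ (0,1), the Hermitian matrix D(−I + sγP) + (−I + s̄γPᵀ)D satisfies D(−I + sγP) + (−I + s̄γPᵀ)D ⪯ 2(γ−1)D, i.e., for all z ∈ ℂ^N one has zᴴ(D(−I + sγP) + (−I + s̄γPᵀ)D)z ≤ 2(γ−1)·zᴴDz; in particular this matrix is negative definite. -/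
open Matrix BigOperators

/-!
Write `B = D(-I + sγP)`. Since `P` and `D` are real, the matrix of the theorem is `B + Bᴴ`, so
its quadratic form is `2 Re zᴴBz = -2 zᴴDz + 2γ Re (s zᴴDPz)`. Row-stochasticity and
stationarity say that both marginals of the weights `dᵢ Pᵢⱼ` equal `d`, so AM–GM gives
`|zᴴDPz| ≤ ∑ᵢⱼ dᵢ Pᵢⱼ |zᵢ| |zⱼ| ≤ zᴴDz`, and with `|s| ≤ 1` the form is at most `2(γ - 1) zᴴDz`.
-/

namespace Matrix

variable {ι : Type*} [Fintype ι]

theorem star_dotProduct_conjTranspose_mulVec (B : Matrix ι ι ℂ) (z : ι → ℂ) :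
    star z ⬝ᵥ Bᴴ *ᵥ z = star (star z ⬝ᵥ B *ᵥ z) := by
  rw [dotProduct_mulVec, ← star_mulVec, dotProduct_comm, star_dotProduct, star_star,
    dotProduct_comm]

theorem re_star_dotProduct_add_conjTranspose_mulVec (B : Matrix ι ι ℂ) (z : ι → ℂ) :
    (star z ⬝ᵥ (B + Bᴴ) *ᵥ z).re = 2 * (star z ⬝ᵥ B *ᵥ z).re := by
  rw [add_mulVec, dotProduct_add, star_dotProduct_conjTranspose_mulVec, Complex.add_re,
    Complex.star_def, Complex.conj_re]
  ring

theorem re_star_dotProduct_diagonal_ofReal_mulVec [DecidableEq ι] (d : ι → ℝ) (z : ι → ℂ) :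
    (star z ⬝ᵥ diagonal (fun i => (d i : ℂ)) *ᵥ z).re = ∑ i, d i * ‖z i‖ ^ 2 := by
  simp only [mulVec_diagonal, dotProduct, Pi.star_apply, Complex.star_def, Complex.re_sum]
  refine Finset.sum_congr rfl fun i _ => ?_
  rw [mul_left_comm, Complex.conj_mul', ← Complex.ofReal_pow, ← Complex.ofReal_mul,
    Complex.ofReal_re]

theorem sum_mul_mul_le_of_vecMul_eq (P : Matrix ι ι ℝ) (d : ι → ℝ) (hP : ∀ i j, 0 ≤ P i j)
    (hrow : ∀ i, ∑ j, P i j = 1) (hstat : d ᵥ* P = d) (hd : ∀ i, 0 ≤ d i) (x : ι → ℝ) :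
    ∑ i, ∑ j, d i * P i j * (x i * x j) ≤ ∑ i, d i * x i ^ 2 := by
  have hleft : ∑ i, ∑ j, d i * P i j * x i ^ 2 = ∑ i, d i * x i ^ 2 :=
    Finset.sum_congr rfl fun i _ => by rw [← Finset.sum_mul, ← Finset.mul_sum, hrow, mul_one]
  have hright : ∑ i, ∑ j, d i * P i j * x j ^ 2 = ∑ j, d j * x j ^ 2 := by
    rw [Finset.sum_comm]
    exact Finset.sum_congr rfl fun j _ => by rw [← Finset.sum_mul, ← congrFun hstat j]; rfl
  calc ∑ i, ∑ j, d i * P i j * (x i * x j)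
      ≤ ∑ i, ∑ j, (d i * P i j * x i ^ 2 + d i * P i j * x j ^ 2) / 2 := by
        gcongr with i _ j _
        nlinarith [mul_nonneg (hd i) (hP i j), sq_nonneg (x i - x j)]
    _ = (∑ i, ∑ j, d i * P i j * x i ^ 2 + ∑ i, ∑ j, d i * P i j * x j ^ 2) / 2 := by
        simp only [← Finset.sum_div, Finset.sum_add_distrib]
    _ = ∑ i, d i * x i ^ 2 := by rw [hleft, hright]; ring

theorem norm_star_dotProduct_diagonal_mul_mulVec_le [DecidableEq ι] (P : Matrix ι ι ℝ)
    (d : ι → ℝ) (hP : ∀ i j, 0 ≤ P i j) (hrow : ∀ i, ∑ j, P i j = 1) (hstat : d ᵥ* P = d)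
    (hd : ∀ i, 0 ≤ d i) (z : ι → ℂ) :
    ‖star z ⬝ᵥ (diagonal (fun i => (d i : ℂ)) * P.map (↑)) *ᵥ z‖ ≤ ∑ i, d i * ‖z i‖ ^ 2 := by
  have expand : star z ⬝ᵥ (diagonal (fun i => (d i : ℂ)) * P.map (↑)) *ᵥ z
      = ∑ i, ∑ j, star (z i) * ((d i * P i j : ℝ) : ℂ) * z j := by
    simp [dotProduct, mulVec, Finset.mul_sum, mul_assoc]
  calc ‖star z ⬝ᵥ (diagonal (fun i => (d i : ℂ)) * P.map (↑)) *ᵥ z‖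
      ≤ ∑ i, ∑ j, d i * P i j * (‖z i‖ * ‖z j‖) := by
        rw [expand]
        refine (norm_sum_le _ _).trans (Finset.sum_le_sum fun i _ =>
          (norm_sum_le _ _).trans (Finset.sum_le_sum fun j _ => le_of_eq ?_))
        rw [norm_mul, norm_mul, norm_star, Complex.norm_real,
          Real.norm_of_nonneg (mul_nonneg (hd i) (hP i j))]
        ring
    _ ≤ ∑ i, d i * ‖z i‖ ^ 2 := sum_mul_mul_le_of_vecMul_eq P d hP hrow hstat hd _

theorem re_star_dotProduct_diagonal_mul_neg_one_add_smul_mulVec_le [DecidableEq ι]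
    (P : Matrix ι ι ℝ) (d : ι → ℝ) (hP : ∀ i j, 0 ≤ P i j) (hrow : ∀ i, ∑ j, P i j = 1)
    (hstat : d ᵥ* P = d) (hd : ∀ i, 0 ≤ d i) {γ : ℝ} (hγ : 0 ≤ γ) {s : ℂ} (hs : ‖s‖ ≤ 1)
    (z : ι → ℂ) :
    (star z ⬝ᵥ (diagonal (fun i => (d i : ℂ)) * (-1 + (s * γ) • P.map (↑))) *ᵥ z).re
      ≤ (γ - 1) * ∑ i, d i * ‖z i‖ ^ 2 := by
  set q := star z ⬝ᵥ (diagonal (fun i => (d i : ℂ)) * P.map (↑)) *ᵥ z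
  have hq := norm_star_dotProduct_diagonal_mul_mulVec_le P d hP hrow hstat hd z
  have hsq : (s * γ * q).re ≤ γ * ∑ i, d i * ‖z i‖ ^ 2 :=
    calc (s * γ * q).re ≤ ‖s‖ * γ * ‖q‖ := by
          simpa [norm_mul, abs_of_nonneg hγ] using Complex.re_le_norm (s * γ * q)
      _ ≤ 1 * γ * ∑ i, d i * ‖z i‖ ^ 2 := by gcongr
      _ = γ * ∑ i, d i * ‖z i‖ ^ 2 := by ring
  rw [mul_add, mul_neg_one, mul_smul_comm, add_mulVec, neg_mulVec, smul_mulVec, dotProduct_add,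
    dotProduct_neg, dotProduct_smul, smul_eq_mul, Complex.add_re, Complex.neg_re,
    re_star_dotProduct_diagonal_ofReal_mulVec]
  linarith

end Matrix

theorem target_td_key_matrix_negative_definite_general
    (N : ℕ)
    (P : Matrix (Fin N) (Fin N) ℝ) (d : Fin N → ℝ) (γ : ℝ)
    (hPnonneg : ∀ i j, 0 ≤ P i j)
    (hProw : ∀ i, ∑ j, P i j = 1)
    (hdpos : ∀ s, 0 < d s)
    (hstat : Matrix.vecMul d P = d)
    (hγ0 : 0 < γ) (hγ1 : γ < 1)
    (s : ℂ) (hs : ‖s‖ ≤ 1) :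
    let Pc : Matrix (Fin N) (Fin N) ℂ := P.map (fun x : ℝ => (x : ℂ))
    let Dc : Matrix (Fin N) (Fin N) ℂ := Matrix.diagonal (fun i => ((d i : ℂ)))
    let M : Matrix (Fin N) (Fin N) ℂ :=
      Dc * (-1 + (s * (γ : ℂ)) • Pc) + (-1 + ((starRingEnd ℂ) s * (γ : ℂ)) • Pcᵀ) * Dc
    (∀ z : Fin N → ℂ,
        (star z ⬝ᵥ M.mulVec z).re ≤ 2 * (γ - 1) * (star z ⬝ᵥ Dc.mulVec z).re) ∧
    (∀ z : Fin N → ℂ, z ≠ 0 → (star z ⬝ᵥ M.mulVec z).re < 0) := by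
  intro Pc Dc M
  have hPc : Pcᴴ = Pcᵀ := by ext; simp [Pc]
  have hDc : Dcᴴ = Dc := by rw [diagonal_conjTranspose]; congr; ext; simp
  have hM : M = Dc * (-1 + (s * γ) • Pc) + (Dc * (-1 + (s * γ) • Pc))ᴴ := by
    simp [M, conjTranspose_mul, hPc, hDc, add_mul]
  have hbound : ∀ z, (star z ⬝ᵥ M *ᵥ z).re ≤ 2 * (γ - 1) * ∑ i, d i * ‖z i‖ ^ 2 := fun z => by
    rw [hM, re_star_dotProduct_add_conjTranspose_mulVec, mul_assoc]
    gcongr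
    exact re_star_dotProduct_diagonal_mul_neg_one_add_smul_mulVec_le P d hPnonneg hProw hstat
      (fun i => (hdpos i).le) hγ0.le hs z
  refine ⟨fun z => ?_, fun z hz => ?_⟩
  · rw [re_star_dotProduct_diagonal_ofReal_mulVec]
    exact hbound z
  · obtain ⟨i, hi⟩ := Function.ne_iff.mp hz
    have hpos : 0 < ∑ i, d i * ‖z i‖ ^ 2 :=
      Finset.sum_pos' (fun j _ => by have := hdpos j; positivity)
        ⟨i, Finset.mem_univ i, mul_pos (hdpos i) (pow_pos (norm_pos_iff.mpr hi) 2)⟩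
    nlinarith [hbound z]

/-- For every complex `s` with `|s| ≤ 1` and every `γ ∈ (0,1)`, the
Hermitian matrix `D(−I + sγP) + (−I + s̄γPᵀ)D` satisfies
`D(−I + sγP) + (−I + s̄γPᵀ)D ⪯ 2(γ−1)D`, i.e. for all `z ∈ ℂ^N` one has
`zᴴ(D(−I + sγP) + (−I + s̄γPᵀ)D)z ≤ 2(γ−1)·zᴴDz`; in particular this matrix is
negative definite. -/
theorem target_td_key_matrix_negative_definite
    (N : ℕ) (hN : 0 < N)
    (P : Matrix (Fin N) (Fin N) ℝ) (d : Fin N → ℝ) (γ : ℝ)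
    (hPnonneg : ∀ i j, 0 ≤ P i j)
    (hProw : ∀ i, ∑ j, P i j = 1)
    (hdpos : ∀ s, 0 < d s)
    (hdsum : ∑ s, d s = 1)
    (hstat : Matrix.vecMul d P = d)
    (hγ0 : 0 < γ) (hγ1 : γ < 1)
    (s : ℂ) (hs : ‖s‖ ≤ 1) :
    let Pc : Matrix (Fin N) (Fin N) ℂ := P.map (fun x : ℝ => (x : ℂ))
    let Dc : Matrix (Fin N) (Fin N) ℂ := Matrix.diagonal (fun i => ((d i : ℂ)))
    let M : Matrix (Fin N) (Fin N) ℂ :=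
      Dc * (-1 + (s * (γ : ℂ)) • Pc) + (-1 + ((starRingEnd ℂ) s * (γ : ℂ)) • Pcᵀ) * Dc
    (∀ z : Fin N → ℂ,
        (star z ⬝ᵥ M.mulVec z).re ≤ 2 * (γ - 1) * (star z ⬝ᵥ Dc.mulVec z).re) ∧
    (∀ z : Fin N → ℂ, z ≠ 0 → (star z ⬝ᵥ M.mulVec z).re < 0) :=
  target_td_key_matrix_negative_definite_general N P d γ hPnonneg hProw hdpos hstat hγ0 hγ1 s hs
end

section
/- For every complex scalar s with |s| ≤ 1, the complex n×n matrix ΦᵀD(−I + sγP)Φ is Hurwitz, i.e., every eigenvalue of ΦᵀD(−I + sγP)Φ has strictly negative real part. -/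
open Matrix BigOperators
open scoped ComplexOrder

/-!
If `M v = μ v` with `v ≠ 0`, then `Re μ · ‖v‖² = Re (x* D (-I + sγP) x)` for `x = Φ v`, and `x ≠ 0`
because a real matrix of full column rank stays injective over `ℂ`. Since `P` is stochastic with
stationary distribution `d`, it is a contraction for the `d`-weighted inner product:
`|x* D P x| ≤ ∑ dᵢ Pᵢⱼ |xᵢ| |xⱼ| ≤ x* D x`, by `|xᵢ| |xⱼ| ≤ (|xᵢ|² + |xⱼ|²) / 2` with the row
sums of `D P` paying for the first half and its column sums `dᵀ P = dᵀ` for the second. Hence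
`Re μ · ‖v‖² ≤ -(1 - γ |s|) x* D x < 0`.
-/

namespace Matrix

variable {m n : Type*}

def IsHurwitz [Fintype n] (M : Matrix n n ℂ) : Prop :=
  ∀ (μ : ℂ) (v : n → ℂ), v ≠ 0 → M *ᵥ v = μ • v → μ.re < 0

theorem mulVec_injective_of_rank_eq_card [Fintype n] {K : Type*} [Field K] {A : Matrix m n K}
    (hA : A.rank = Fintype.card n) : Function.Injective A.mulVec := by
  have hker : Module.finrank K (LinearMap.ker A.mulVecLin) = 0 := by
    have := A.mulVecLin.finrank_range_add_finrank_ker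
    rw [Module.finrank_fintype_fun_eq_card] at this
    rw [rank] at hA
    omega
  exact LinearMap.ker_eq_bot.mp (Submodule.finrank_eq_zero.mp hker)

theorem re_map_ofReal_mulVec [Fintype n] (A : Matrix m n ℝ) (v : n → ℂ) (i : m) :
    ((A.map ((↑) : ℝ → ℂ) *ᵥ v) i).re = (A *ᵥ fun j => (v j).re) i := by
  simp [mulVec, dotProduct, Complex.re_sum]

theorem im_map_ofReal_mulVec [Fintype n] (A : Matrix m n ℝ) (v : n → ℂ) (i : m) :
    ((A.map ((↑) : ℝ → ℂ) *ᵥ v) i).im = (A *ᵥ fun j => (v j).im) i := by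
  simp [mulVec, dotProduct, Complex.im_sum]

theorem mulVec_map_ofReal_injective [Fintype n] {A : Matrix m n ℝ}
    (hA : Function.Injective A.mulVec) :
    Function.Injective (A.map ((↑) : ℝ → ℂ)).mulVec := by
  intro v w hvw
  have hre : (fun j => (v j).re) = fun j => (w j).re := hA <| funext fun i => by
    rw [← re_map_ofReal_mulVec, ← re_map_ofReal_mulVec, hvw]
  have him : (fun j => (v j).im) = fun j => (w j).im := hA <| funext fun i => by
    rw [← im_map_ofReal_mulVec, ← im_map_ofReal_mulVec, hvw]
  exact funext fun j => Complex.ext (congrFun hre j) (congrFun him j)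

theorem transpose_map_ofReal_eq_conjTranspose (A : Matrix m n ℝ) :
    (A.map ((↑) : ℝ → ℂ))ᵀ = (A.map ((↑) : ℝ → ℂ))ᴴ := by
  rw [← conjTranspose_map _ fun _ => (Complex.conj_ofReal _).symm,
    conjTranspose_eq_transpose_of_trivial, transpose_map]

theorem star_dotProduct_conjTranspose_mul_mul_mulVec [Fintype m] [Fintype n] {R : Type*}
    [CommRing R] [StarRing R] (B : Matrix m n R) (A : Matrix m m R) (v : n → R) :
    star v ⬝ᵥ (Bᴴ * A * B) *ᵥ v = star (B *ᵥ v) ⬝ᵥ A *ᵥ (B *ᵥ v) := by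
  simp only [star_mulVec, dotProduct_mulVec, vecMul_vecMul, mulVec_mulVec, Matrix.mul_assoc]

theorem IsHurwitz.of_re_star_dotProduct_mulVec_neg [Fintype n] {M : Matrix n n ℂ}
    (hM : ∀ v : n → ℂ, v ≠ 0 → (star v ⬝ᵥ M *ᵥ v).re < 0) : M.IsHurwitz := by
  intro μ v hv hμ
  have hpos : 0 < star v ⬝ᵥ v := dotProduct_star_self_pos_iff.mpr hv
  have hquad := hM v hv
  rw [hμ, dotProduct_smul, smul_eq_mul, Complex.mul_re, ← (Complex.pos_iff.mp hpos).2,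
    mul_zero, sub_zero] at hquad
  exact neg_of_mul_neg_left hquad (Complex.pos_iff.mp hpos).1.le

end Matrix

section Stationary

variable {ι : Type*} [Fintype ι]

theorem sum_sum_mul_mul_le_of_marginals (w : ι → ι → ℝ) (d a : ι → ℝ)
    (hw : ∀ i j, 0 ≤ w i j) (hrow : ∀ i, ∑ j, w i j = d i) (hcol : ∀ j, ∑ i, w i j = d j) :
    ∑ i, ∑ j, w i j * (a i * a j) ≤ ∑ i, d i * a i ^ 2 := by
  have hrow' : ∑ i, ∑ j, w i j * a i ^ 2 = ∑ i, d i * a i ^ 2 := by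
    simp_rw [← Finset.sum_mul, hrow]
  have hcol' : ∑ i, ∑ j, w i j * a j ^ 2 = ∑ i, d i * a i ^ 2 := by
    rw [Finset.sum_comm]
    simp_rw [← Finset.sum_mul, hcol]
  calc ∑ i, ∑ j, w i j * (a i * a j)
      ≤ ∑ i, ∑ j, (w i j * a i ^ 2 + w i j * a j ^ 2) / 2 := by
        gcongr with i _ j _
        nlinarith [hw i j, mul_nonneg (hw i j) (sq_nonneg (a i - a j))]
    _ = ∑ i, d i * a i ^ 2 := by
        simp only [← Finset.sum_div, Finset.sum_add_distrib, hrow', hcol']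
        ring

theorem norm_star_dotProduct_diagonal_mul_map_ofReal_mulVec_le [DecidableEq ι]
    (P : Matrix ι ι ℝ) (d : ι → ℝ)
    (hP : ∀ i j, 0 ≤ P i j) (hrow : ∀ i, ∑ j, P i j = 1) (hd : ∀ i, 0 ≤ d i)
    (hstat : vecMul d P = d) (x : ι → ℂ) :
    ‖star x ⬝ᵥ (diagonal (fun i => (d i : ℂ)) * P.map (↑)) *ᵥ x‖ ≤ ∑ i, d i * ‖x i‖ ^ 2 := by
  have hexpand : star x ⬝ᵥ (diagonal (fun i => (d i : ℂ)) * P.map (↑)) *ᵥ x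
      = ∑ i, ∑ j, ((d i * P i j : ℝ) : ℂ) * (star (x i) * x j) := by
    simp only [dotProduct, mulVec, diagonal_mul, map_apply, Pi.star_apply, Finset.mul_sum]
    refine Finset.sum_congr rfl fun i _ => Finset.sum_congr rfl fun j _ => ?_
    push_cast
    ring
  calc ‖star x ⬝ᵥ (diagonal (fun i => (d i : ℂ)) * P.map (↑)) *ᵥ x‖
      ≤ ∑ i, ∑ j, d i * P i j * (‖x i‖ * ‖x j‖) := by
        rw [hexpand]
        refine (norm_sum_le _ _).trans (Finset.sum_le_sum fun i _ => ?_)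
        refine (norm_sum_le _ _).trans (Finset.sum_le_sum fun j _ => ?_)
        rw [norm_mul, norm_mul, norm_star, Complex.norm_real, Real.norm_of_nonneg
          (mul_nonneg (hd i) (hP i j))]
    _ ≤ ∑ i, d i * ‖x i‖ ^ 2 :=
        sum_sum_mul_mul_le_of_marginals _ _ _ (fun i j => mul_nonneg (hd i) (hP i j))
          (fun i => by rw [← Finset.mul_sum, hrow, mul_one]) (fun j => congrFun hstat j)

theorem re_star_dotProduct_diagonal_mul_neg_one_add_smul_mulVec_neg [DecidableEq ι]
    (P : Matrix ι ι ℝ) (d : ι → ℝ) (hP : ∀ i j, 0 ≤ P i j) (hrow : ∀ i, ∑ j, P i j = 1)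
    (hd : ∀ i, 0 < d i) (hstat : vecMul d P = d) {a : ℂ} (ha : ‖a‖ < 1) {x : ι → ℂ}
    (hx : x ≠ 0) :
    (star x ⬝ᵥ (diagonal (fun i => (d i : ℂ)) * (-1 + a • P.map (↑))) *ᵥ x).re < 0 := by
  set D : Matrix ι ι ℂ := diagonal fun i => (d i : ℂ)
  set T := star x ⬝ᵥ (D * P.map (↑)) *ᵥ x
  set Q := ∑ i, d i * ‖x i‖ ^ 2
  have hQ : 0 < Q := by
    obtain ⟨i, hi⟩ := Function.ne_iff.mp hx
    exact Finset.sum_pos' (fun j _ => mul_nonneg (hd j).le (sq_nonneg _))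
      ⟨i, Finset.mem_univ i, mul_pos (hd i) (pow_pos (norm_pos_iff.mpr hi) 2)⟩
  have hDx : star x ⬝ᵥ D *ᵥ x = Q := by
    simp only [D, Q, dotProduct, mulVec_diagonal, Pi.star_apply, Complex.ofReal_sum,
      Complex.ofReal_mul, Complex.ofReal_pow]
    refine Finset.sum_congr rfl fun i _ => ?_
    rw [mul_left_comm, RCLike.star_def, Complex.conj_mul']
  have hsplit : star x ⬝ᵥ (D * (-1 + a • P.map (↑))) *ᵥ x = -(Q : ℂ) + a * T := by
    rw [mul_add, mul_neg, mul_one, mul_smul_comm, add_mulVec, neg_mulVec, smul_mulVec,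
      dotProduct_add, dotProduct_neg, dotProduct_smul, hDx, smul_eq_mul]
  have hT : ‖T‖ ≤ Q :=
    norm_star_dotProduct_diagonal_mul_map_ofReal_mulVec_le P d hP hrow (fun i => (hd i).le)
      hstat x
  calc (star x ⬝ᵥ (D * (-1 + a • P.map (↑))) *ᵥ x).re
      = -Q + (a * T).re := by simp [hsplit]
    _ ≤ -Q + ‖a‖ * Q := by
        gcongr
        exact (Complex.re_le_norm _).trans
          ((norm_mul a T).trans_le (mul_le_mul_of_nonneg_left hT (norm_nonneg a)))
    _ < 0 := by nlinarith

end Stationary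

theorem phi_D_shifted_stochastic_phi_is_Hurwitz_general
    (N n : ℕ)
    (P : Matrix (Fin N) (Fin N) ℝ) (d : Fin N → ℝ) (γ : ℝ)
    (Φ : Matrix (Fin N) (Fin n) ℝ)
    (hPnonneg : ∀ i j, 0 ≤ P i j)
    (hProw : ∀ i, ∑ j, P i j = 1)
    (hdpos : ∀ s, 0 < d s)
    (hstat : Matrix.vecMul d P = d)
    (hγ0 : 0 < γ) (hγ1 : γ < 1)
    (hΦ : Φ.rank = n)
    (s : ℂ) (hs : ‖s‖ ≤ 1) :
    let Pc : Matrix (Fin N) (Fin N) ℂ := P.map (fun x : ℝ => (x : ℂ))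
    let Dc : Matrix (Fin N) (Fin N) ℂ := Matrix.diagonal (fun i => ((d i : ℂ)))
    let Φc : Matrix (Fin N) (Fin n) ℂ := Φ.map (fun x : ℝ => (x : ℂ))
    let M : Matrix (Fin n) (Fin n) ℂ := Φcᵀ * Dc * (-1 + (s * (γ : ℂ)) • Pc) * Φc
    ∀ (μ : ℂ) (v : Fin n → ℂ), v ≠ 0 → M.mulVec v = μ • v → μ.re < 0 := by
  intro Pc Dc Φc M
  have hΦc : Function.Injective Φc.mulVec :=
    mulVec_map_ofReal_injective (mulVec_injective_of_rank_eq_card (by simpa using hΦ))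
  have hsγ : ‖s * (γ : ℂ)‖ < 1 := by
    rw [norm_mul, Complex.norm_real, Real.norm_of_nonneg hγ0.le]
    nlinarith [norm_nonneg s]
  have hM : M = Φcᴴ * (Dc * (-1 + (s * (γ : ℂ)) • Pc)) * Φc := by
    rw [← Matrix.mul_assoc, ← transpose_map_ofReal_eq_conjTranspose]
  refine IsHurwitz.of_re_star_dotProduct_mulVec_neg fun v hv => ?_
  rw [hM, star_dotProduct_conjTranspose_mul_mul_mulVec]
  exact re_star_dotProduct_diagonal_mul_neg_one_add_smul_mulVec_neg P d hPnonneg hProw hdpos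
    hstat hsγ ((hΦc.ne_iff' (mulVec_zero Φc)).mpr hv)

/-- For every complex scalar `s` with `|s| ≤ 1`, the complex `n×n`
matrix `ΦᵀD(−I + sγP)Φ` is Hurwitz: every eigenvalue has strictly negative real
part. -/
theorem phi_D_shifted_stochastic_phi_is_Hurwitz
    (N n : ℕ) (hN : 0 < N) (hn : 0 < n) (hnN : n ≤ N)
    (P : Matrix (Fin N) (Fin N) ℝ) (d : Fin N → ℝ) (γ : ℝ)
    (Φ : Matrix (Fin N) (Fin n) ℝ)
    (hPnonneg : ∀ i j, 0 ≤ P i j)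
    (hProw : ∀ i, ∑ j, P i j = 1)
    (hdpos : ∀ s, 0 < d s)
    (hdsum : ∑ s, d s = 1)
    (hstat : Matrix.vecMul d P = d)
    (hγ0 : 0 < γ) (hγ1 : γ < 1)
    (hΦ : Φ.rank = n)
    (s : ℂ) (hs : ‖s‖ ≤ 1) :
    let Pc : Matrix (Fin N) (Fin N) ℂ := P.map (fun x : ℝ => (x : ℂ))
    let Dc : Matrix (Fin N) (Fin N) ℂ := Matrix.diagonal (fun i => ((d i : ℂ)))
    let Φc : Matrix (Fin N) (Fin n) ℂ := Φ.map (fun x : ℝ => (x : ℂ))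
    let M : Matrix (Fin n) (Fin n) ℂ := Φcᵀ * Dc * (-1 + (s * (γ : ℂ)) • Pc) * Φc
    ∀ (μ : ℂ) (v : Fin n → ℂ), v ≠ 0 → M.mulVec v = μ • v → μ.re < 0 :=
  phi_D_shifted_stochastic_phi_is_Hurwitz_general N n P d γ Φ hPnonneg hProw hdpos hstat hγ0 hγ1 hΦ
    s hs
end

section
/- The vector θ* := −(ΦᵀD(γP − I)Φ)⁻¹ΦᵀDR satisfies the projected Bellman equation Φθ* = Π(R + γPΦθ*), where Π := Φ(ΦᵀDΦ)⁻¹ΦᵀD; moreover θ* is the unique θ ∈ ℝⁿ with Φθ = Π(R + γPΦθ). -/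
/-!
Since `d` is stationary for the stochastic matrix `P`, the AM–GM bound
`y_i y_j ≤ (y_i² + y_j²)/2` averaged against `d_i P_ij` gives `yᵀDPy ≤ yᵀDy`, so `D(γP − I)` is
negative definite for `0 ≤ γ < 1`, while `D` is positive definite. Compressing by the injective
`Φ` keeps both definite, hence `ΦᵀDΦ` and `ΦᵀD(γP − I)Φ` are invertible. With `ΦᵀDΦ`
invertible, `Φθ = Πv` is equivalent to the normal equation `ΦᵀDΦθ = ΦᵀDv`; for
`v = R + γPΦθ` this is the linear system `ΦᵀD(γP − I)Φθ = −ΦᵀDR`, whose unique solution is `θ*`.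
-/

open Matrix BigOperators
namespace Matrix

variable {ι κ K : Type*} [Fintype κ]

theorem mulVec_injective_of_rank_eq_card_s5 [Field K] {Φ : Matrix ι κ K}
    (h : Φ.rank = Fintype.card κ) : Function.Injective Φ.mulVec := by
  rw [mulVec_injective_iff, linearIndependent_iff_card_eq_finrank_span, Set.finrank,
    ← rank_eq_finrank_span_cols, h]

variable [Fintype ι]

theorem dotProduct_transpose_mul_mul_mulVec [CommRing K] (Φ : Matrix ι κ K) (M : Matrix ι ι K)
    (x : κ → K) : x ⬝ᵥ (Φᵀ * M * Φ) *ᵥ x = (Φ *ᵥ x) ⬝ᵥ M *ᵥ Φ *ᵥ x := by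
  rw [← mulVec_mulVec, ← mulVec_mulVec, dotProduct_transpose_mulVec, dotProduct_comm]

theorem isUnit_det_transpose_mul_mul [Field K] [DecidableEq κ] {Φ : Matrix ι κ K}
    {M : Matrix ι ι K} (hΦ : Function.Injective Φ.mulVec) (hM : ∀ y ≠ 0, y ⬝ᵥ M *ᵥ y ≠ 0) :
    IsUnit (Φᵀ * M * Φ).det := by
  refine (isUnit_iff_isUnit_det _).1 (mulVec_injective_iff_isUnit.1 ?_)
  rw [← coe_mulVecLin, ← LinearMap.ker_eq_bot, ker_mulVecLin_eq_bot_iff]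
  intro x hx
  by_contra hx0
  have hΦx : Φ *ᵥ x ≠ 0 := by simpa using hΦ.ne hx0
  exact hM _ hΦx (by rw [← dotProduct_transpose_mul_mul_mulVec, hx, dotProduct_zero])

theorem mulVec_eq_iff_eq_inv_mulVec [DecidableEq κ] [CommRing K] {B : Matrix κ κ K}
    (hB : IsUnit B.det) {θ c : κ → K} : B *ᵥ θ = c ↔ θ = B⁻¹ *ᵥ c := by
  constructor
  · rintro rfl
    rw [mulVec_mulVec, nonsing_inv_mul _ hB, one_mulVec]
  · rintro rfl
    rw [mulVec_mulVec, mul_nonsing_inv _ hB, one_mulVec]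

theorem mulVec_eq_mul_inv_mul_mulVec_iff [DecidableEq κ] [CommRing K] {Φ : Matrix ι κ K}
    {L : Matrix κ ι K} (hLΦ : IsUnit (L * Φ).det) {θ : κ → K} {v : ι → K} :
    Φ *ᵥ θ = (Φ * (L * Φ)⁻¹ * L) *ᵥ v ↔ (L * Φ) *ᵥ θ = L *ᵥ v := by
  constructor
  · intro h
    rw [← mulVec_mulVec, h, mulVec_mulVec, ← Matrix.mul_assoc, ← Matrix.mul_assoc,
      mul_nonsing_inv _ hLΦ, Matrix.one_mul]
  · intro h
    rw [← mulVec_mulVec, ← h, mulVec_mulVec, Matrix.mul_assoc, nonsing_inv_mul _ hLΦ,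
      Matrix.mul_one]

theorem mulVec_eq_mulVec_bellman_iff [DecidableEq ι] [CommRing K] (L : Matrix κ ι K)
    (P : Matrix ι ι K) (Φ : Matrix ι κ K) (R : ι → K) (γ : K) (θ : κ → K) :
    (L * Φ) *ᵥ θ = L *ᵥ (R + γ • P *ᵥ Φ *ᵥ θ) ↔ (L * (γ • P - 1) * Φ) *ᵥ θ = -(L *ᵥ R) := by
  simp only [Matrix.mul_sub, Matrix.sub_mul, Matrix.mul_smul, Matrix.smul_mul, Matrix.mul_one,
    sub_mulVec, smul_mulVec, mulVec_add, mulVec_smul, ← mulVec_mulVec]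
  constructor <;> intro h <;> linear_combination (norm := module) -h

section Stochastic

variable {ι : Type*} [Fintype ι] [DecidableEq ι] {P : Matrix ι ι ℝ} {d : ι → ℝ}

theorem dotProduct_diagonal_mul_mulVec_le_of_stationary (hP : ∀ i j, 0 ≤ P i j)
    (hProw : ∀ i, ∑ j, P i j = 1) (hd : ∀ i, 0 ≤ d i) (hstat : d ᵥ* P = d) (y : ι → ℝ) :
    y ⬝ᵥ (diagonal d * P) *ᵥ y ≤ y ⬝ᵥ diagonal d *ᵥ y := by
  have hrow : ∑ i, ∑ j, d i * P i j * y i ^ 2 = ∑ i, d i * y i ^ 2 := by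
    refine Finset.sum_congr rfl fun i _ => ?_
    rw [← Finset.sum_mul, ← Finset.mul_sum, hProw, mul_one]
  have hcol : ∑ i, ∑ j, d i * P i j * y j ^ 2 = ∑ j, d j * y j ^ 2 := by
    rw [Finset.sum_comm]
    refine Finset.sum_congr rfl fun j _ => ?_
    rw [← Finset.sum_mul, ← congrFun hstat j, vecMul, dotProduct]
  calc y ⬝ᵥ (diagonal d * P) *ᵥ y = ∑ i, ∑ j, d i * P i j * (y i * y j) := by
        simp only [dotProduct, mulVec, diagonal_mul, Finset.mul_sum]
        exact Finset.sum_congr rfl fun i _ => Finset.sum_congr rfl fun j _ => by ring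
    _ ≤ ∑ i, ∑ j, d i * P i j * ((y i ^ 2 + y j ^ 2) / 2) := by
        gcongr with i _ j _
        · exact mul_nonneg (hd i) (hP i j)
        · nlinarith [sq_nonneg (y i - y j)]
    _ = ((∑ i, ∑ j, d i * P i j * y i ^ 2) + ∑ i, ∑ j, d i * P i j * y j ^ 2) / 2 := by
        simp only [Finset.sum_div, ← Finset.sum_add_distrib]
        exact Finset.sum_congr rfl fun i _ => Finset.sum_congr rfl fun j _ => by ring
    _ = y ⬝ᵥ diagonal d *ᵥ y := by
        rw [hrow, hcol, add_self_div_two]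
        simp only [dotProduct, mulVec_diagonal]
        exact Finset.sum_congr rfl fun i _ => by ring

theorem dotProduct_diagonal_mul_smul_sub_one_mulVec_neg (hP : ∀ i j, 0 ≤ P i j)
    (hProw : ∀ i, ∑ j, P i j = 1) (hd : ∀ i, 0 < d i) (hstat : d ᵥ* P = d) {γ : ℝ}
    (hγ0 : 0 ≤ γ) (hγ1 : γ < 1) {y : ι → ℝ} (hy : y ≠ 0) :
    y ⬝ᵥ (diagonal d * (γ • P - 1)) *ᵥ y < 0 := by
  have hle := dotProduct_diagonal_mul_mulVec_le_of_stationary hP hProw (fun i => (hd i).le) hstat y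
  have hpos : 0 < y ⬝ᵥ diagonal d *ᵥ y := by
    simpa using (posDef_diagonal_iff.2 hd).dotProduct_mulVec_pos hy
  rw [Matrix.mul_sub, Matrix.mul_smul, Matrix.mul_one, sub_mulVec, smul_mulVec, dotProduct_sub,
    dotProduct_smul, smul_eq_mul]
  nlinarith

end Stochastic

end Matrix

theorem theta_star_solves_projected_Bellman_uniquely_general
    (N n : ℕ)
    (P : Matrix (Fin N) (Fin N) ℝ) (d : Fin N → ℝ) (γ : ℝ)
    (Φ : Matrix (Fin N) (Fin n) ℝ) (R : Fin N → ℝ)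
    (hPnonneg : ∀ i j, 0 ≤ P i j)
    (hProw : ∀ i, ∑ j, P i j = 1)
    (hdpos : ∀ s, 0 < d s)
    (hstat : Matrix.vecMul d P = d)
    (hγ0 : 0 < γ) (hγ1 : γ < 1)
    (hΦ : Φ.rank = n) :
    let D : Matrix (Fin N) (Fin N) ℝ := Matrix.diagonal d
    let Proj : Matrix (Fin N) (Fin N) ℝ := Φ * (Φᵀ * D * Φ)⁻¹ * Φᵀ * D
    let θstar : Fin n → ℝ :=
      -((Φᵀ * D * (γ • P - 1) * Φ)⁻¹.mulVec ((Φᵀ * D).mulVec R))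
    Φ.mulVec θstar = Proj.mulVec (R + γ • P.mulVec (Φ.mulVec θstar)) ∧
    ∀ θ : Fin n → ℝ,
      Φ.mulVec θ = Proj.mulVec (R + γ • P.mulVec (Φ.mulVec θ)) → θ = θstar := by
  intro D Proj θstar
  have hΦinj : Function.Injective Φ.mulVec :=
    mulVec_injective_of_rank_eq_card_s5 (hΦ.trans (Fintype.card_fin n).symm)
  have hA : IsUnit (Φᵀ * D * Φ).det := isUnit_det_transpose_mul_mul hΦinj fun y hy =>
    by simpa using ((posDef_diagonal_iff.2 hdpos).dotProduct_mulVec_pos hy).ne'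
  have hB : IsUnit (Φᵀ * D * (γ • P - 1) * Φ).det := by
    simpa only [Matrix.mul_assoc] using isUnit_det_transpose_mul_mul hΦinj fun y hy =>
      (dotProduct_diagonal_mul_smul_sub_one_mulVec_neg hPnonneg hProw hdpos hstat hγ0.le hγ1
        hy).ne
  have hBellman : ∀ θ, Φ *ᵥ θ = Proj *ᵥ (R + γ • P *ᵥ Φ *ᵥ θ) ↔ θ = θstar := fun θ => by
    rw [show Proj = Φ * (Φᵀ * D * Φ)⁻¹ * (Φᵀ * D) by simp only [Proj, Matrix.mul_assoc],
      mulVec_eq_mul_inv_mul_mulVec_iff hA, mulVec_eq_mulVec_bellman_iff,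
      mulVec_eq_iff_eq_inv_mulVec hB, mulVec_neg]
  exact ⟨(hBellman θstar).2 rfl, fun θ => (hBellman θ).1⟩

/-- The vector `θ* := −(ΦᵀD(γP − I)Φ)⁻¹ΦᵀDR` satisfies the
projected Bellman equation `Φθ* = Π(R + γPΦθ*)`, where
`Π := Φ(ΦᵀDΦ)⁻¹ΦᵀD`; moreover `θ*` is the unique `θ ∈ ℝⁿ` with
`Φθ = Π(R + γPΦθ)`. -/
theorem theta_star_solves_projected_Bellman_uniquely
    (N n : ℕ) (hN : 0 < N) (hn : 0 < n) (hnN : n ≤ N)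
    (P : Matrix (Fin N) (Fin N) ℝ) (d : Fin N → ℝ) (γ : ℝ)
    (Φ : Matrix (Fin N) (Fin n) ℝ) (R : Fin N → ℝ)
    (hPnonneg : ∀ i j, 0 ≤ P i j)
    (hProw : ∀ i, ∑ j, P i j = 1)
    (hdpos : ∀ s, 0 < d s)
    (hdsum : ∑ s, d s = 1)
    (hstat : Matrix.vecMul d P = d)
    (hγ0 : 0 < γ) (hγ1 : γ < 1)
    (hΦ : Φ.rank = n) :
    let D : Matrix (Fin N) (Fin N) ℝ := Matrix.diagonal d
    let Proj : Matrix (Fin N) (Fin N) ℝ := Φ * (Φᵀ * D * Φ)⁻¹ * Φᵀ * D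
    let θstar : Fin n → ℝ :=
      -((Φᵀ * D * (γ • P - 1) * Φ)⁻¹.mulVec ((Φᵀ * D).mulVec R))
    Φ.mulVec θstar = Proj.mulVec (R + γ • P.mulVec (Φ.mulVec θstar)) ∧
    ∀ θ : Fin n → ℝ,
      Φ.mulVec θ = Proj.mulVec (R + γ • P.mulVec (Φ.mulVec θ)) → θ = θstar :=
  theta_star_solves_projected_Bellman_uniquely_general N n P d γ Φ R hPnonneg hProw hdpos hstat hγ0
    hγ1 hΦ
end

section
/- Let B ∈ ℝ^{2n×2n} satisfy Bᵀ + B ≺ 0 (negative definite), and let C := [[0, I], [I, 0]] ∈ ℝ^{2n×2n} be the block swap matrix. Then the matrix A := B + CBC satisfies Aᵀ + A ≺ 0; in particular A is Hurwitz, i.e., every eigenvalue of A has strictly negative real part. -/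
open Matrix BigOperators

lemma hurwitz_of_negdef {ι : Type*} [Fintype ι] [DecidableEq ι]
    (A : Matrix ι ι ℝ)
    (hM : ∀ x : ι → ℝ, x ≠ 0 → x ⬝ᵥ (Aᵀ + A).mulVec x < 0)
    (μ : ℂ) (v : ι → ℂ) (hv : v ≠ 0)
    (hev : (A.map (fun x : ℝ => (x : ℂ))).mulVec v = μ • v) : μ.re < 0 := by
  set a : ι → ℝ := fun i => (v i).re with ha
  set b : ι → ℝ := fun i => (v i).im with hb
  set T : (ι → ℝ) → ℝ := fun x => ∑ i, x i * ∑ j, A i j * x j with hT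
  -- quadratic form equals 2 * T
  have hQ : ∀ x : ι → ℝ, x ⬝ᵥ (Aᵀ + A).mulVec x = 2 * T x := by
    intro x
    simp only [dotProduct, mulVec, transpose_apply, Matrix.add_apply, hT]
    rw [two_mul]
    have h1 : ∑ i, x i * ∑ j, (A j i + A i j) * x j
        = (∑ i, ∑ j, A j i * (x i * x j)) + ∑ i, ∑ j, A i j * (x i * x j) := by
      rw [← Finset.sum_add_distrib]
      congr 1; ext i
      rw [← Finset.sum_add_distrib, Finset.mul_sum]
      congr 1; ext j; ring
    rw [h1]
    congr 1
    · rw [Finset.sum_comm]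
      congr 1; ext i
      rw [Finset.mul_sum]
      congr 1; ext j; ring
    · congr 1; ext i
      rw [Finset.mul_sum]
      congr 1; ext j; ring
  have hTneg : ∀ x : ι → ℝ, x ≠ 0 → T x < 0 := by
    intro x hx
    have := hM x hx
    rw [hQ] at this
    linarith
  have hTle : ∀ x : ι → ℝ, T x ≤ 0 := by
    intro x
    by_cases hx : x = 0
    · subst hx; simp [hT]
    · exact le_of_lt (hTneg x hx)
  -- eigen equation componentwise
  have hev' : ∀ i, (∑ j, (A i j : ℂ) * v j) = μ * v i := by
    intro i
    have := congrFun hev i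
    simpa [mulVec, dotProduct, Matrix.map_apply] using this
  have hre : ∀ i, ∑ j, A i j * a j = μ.re * a i - μ.im * b i := by
    intro i
    have := congrArg Complex.re (hev' i)
    simpa [Complex.mul_re, ha, hb] using this
  have him : ∀ i, ∑ j, A i j * b j = μ.re * b i + μ.im * a i := by
    intro i
    have := congrArg Complex.im (hev' i)
    simpa [Complex.mul_im, ha, hb] using this
  set N : ℝ := ∑ i, (a i ^ 2 + b i ^ 2) with hN
  have hNpos : 0 < N := by
    obtain ⟨i, hi⟩ : ∃ i, v i ≠ 0 := by
      by_contra h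
      push_neg at h
      exact hv (funext h)
    apply Finset.sum_pos' (fun j _ => by positivity)
    refine ⟨i, Finset.mem_univ i, ?_⟩
    have : a i ≠ 0 ∨ b i ≠ 0 := by
      by_contra h
      push_neg at h
      exact hi (Complex.ext h.1 h.2)
    rcases this with h | h
    · have : 0 < a i ^ 2 := by positivity
      nlinarith [sq_nonneg (b i)]
    · have : 0 < b i ^ 2 := by positivity
      nlinarith [sq_nonneg (a i)]
  have key : T a + T b = μ.re * N := by
    simp only [hT, hN]
    rw [← Finset.sum_add_distrib, Finset.mul_sum]
    congr 1; ext i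
    rw [hre i, him i]; ring
  have hab : a ≠ 0 ∨ b ≠ 0 := by
    by_contra h
    push_neg at h
    apply hv
    funext i
    have h1 := congrFun h.1 i
    have h2 := congrFun h.2 i
    exact Complex.ext h1 h2
  have hsum : T a + T b < 0 := by
    rcases hab with h | h
    · have := hTneg a h; have := hTle b; linarith
    · have := hTneg b h; have := hTle a; linarith
  rw [key] at hsum
  by_contra h
  push_neg at h
  nlinarith

/-- Let `B ∈ ℝ^{2n×2n}` satisfy `Bᵀ + B ≺ 0`, and let
`C := [[0, I], [I, 0]]` be the block swap matrix. Then `A := B + CBC`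
satisfies `Aᵀ + A ≺ 0`; in particular `A` is Hurwitz (every eigenvalue of `A`
has strictly negative real part). -/
theorem double_TD_structural_lemma
    (n : ℕ) (hn : 0 < n)
    (B : Matrix (Fin n ⊕ Fin n) (Fin n ⊕ Fin n) ℝ)
    (hB : ∀ x : (Fin n ⊕ Fin n) → ℝ, x ≠ 0 → x ⬝ᵥ (Bᵀ + B).mulVec x < 0) :
    let C : Matrix (Fin n ⊕ Fin n) (Fin n ⊕ Fin n) ℝ :=
      Matrix.fromBlocks 0 (1 : Matrix (Fin n) (Fin n) ℝ) (1 : Matrix (Fin n) (Fin n) ℝ) 0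
    let A : Matrix (Fin n ⊕ Fin n) (Fin n ⊕ Fin n) ℝ := B + C * B * C
    (∀ x : (Fin n ⊕ Fin n) → ℝ, x ≠ 0 → x ⬝ᵥ (Aᵀ + A).mulVec x < 0) ∧
    (∀ (μ : ℂ) (v : (Fin n ⊕ Fin n) → ℂ), v ≠ 0 →
      (A.map (fun x : ℝ => (x : ℂ))).mulVec v = μ • v → μ.re < 0) := by
  intro C A
  have hCsymm : Cᵀ = C := by
    simp [C, fromBlocks_transpose]
  have hCC : C * C = 1 := by
    simp [C, fromBlocks_multiply, ← fromBlocks_one]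
  have hAT : Aᵀ + A = (Bᵀ + B) + C * (Bᵀ + B) * C := by
    have : Aᵀ = Bᵀ + C * Bᵀ * C := by
      simp [A, transpose_add, transpose_mul, hCsymm, Matrix.mul_assoc]
    rw [this]
    simp [A]
    noncomm_ring
  have hneg : ∀ x : (Fin n ⊕ Fin n) → ℝ, x ≠ 0 → x ⬝ᵥ (Aᵀ + A).mulVec x < 0 := by
    intro x hx
    rw [hAT]
    rw [Matrix.add_mulVec, dotProduct_add]
    have hCx : C.mulVec x ≠ 0 := by
      intro h
      apply hx
      have : (C * C).mulVec x = C.mulVec (C.mulVec x) := by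
        rw [← mulVec_mulVec]
      rw [hCC, one_mulVec] at this
      rw [this, h, mulVec_zero]
    have h2 : x ⬝ᵥ (C * (Bᵀ + B) * C).mulVec x
        = (C.mulVec x) ⬝ᵥ (Bᵀ + B).mulVec (C.mulVec x) := by
      rw [← mulVec_mulVec, ← mulVec_mulVec, dotProduct_mulVec, ← mulVec_transpose, hCsymm]
    rw [h2]
    have := hB x hx
    have := hB (C.mulVec x) hCx
    linarith
  exact ⟨hneg, fun μ v hv hev => hurwitz_of_negdef A hneg μ v hv hev⟩
end

section
/- The projected Bellman operator F is a γ-contraction with respect to ‖·‖_D on the range of Φ: for all x, y ∈ ℝⁿ, ‖F(Φx) − F(Φy)‖_D ≤ γ‖Φx − Φy‖_D, where F(z) := Π(R + γPz) and Π := Φ(ΦᵀDΦ)⁻¹ΦᵀD. -/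
open Matrix BigOperators

private lemma qf_diag {N : ℕ} (d v w : Fin N → ℝ) :
    v ⬝ᵥ (Matrix.diagonal d).mulVec w = ∑ i, d i * (v i * w i) := by
  simp only [dotProduct, Matrix.mulVec_diagonal]
  exact Finset.sum_congr rfl (fun i _ => by ring)

private lemma cs_weighted {N : ℕ} (d a b : Fin N → ℝ) (hd : ∀ i, 0 ≤ d i) :
    (∑ i, d i * (a i * b i)) ^ 2 ≤ (∑ i, d i * (a i * a i)) * (∑ i, d i * (b i * b i)) := by
  have h := Finset.sum_mul_sq_le_sq_mul_sq Finset.univ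
      (fun i => Real.sqrt (d i) * a i) (fun i => Real.sqrt (d i) * b i)
  have e1 : ∀ i : Fin N, (Real.sqrt (d i) * a i) * (Real.sqrt (d i) * b i) = d i * (a i * b i) := by
    intro i
    have : Real.sqrt (d i) * Real.sqrt (d i) = d i := Real.mul_self_sqrt (hd i)
    linear_combination (a i * b i) * this
  have e2 : ∀ i : Fin N, (Real.sqrt (d i) * a i) ^ 2 = d i * (a i * a i) := by
    intro i
    have : Real.sqrt (d i) * Real.sqrt (d i) = d i := Real.mul_self_sqrt (hd i)
    linear_combination (a i * a i) * this
  have e3 : ∀ i : Fin N, (Real.sqrt (d i) * b i) ^ 2 = d i * (b i * b i) := by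
    intro i
    have : Real.sqrt (d i) * Real.sqrt (d i) = d i := Real.mul_self_sqrt (hd i)
    linear_combination (b i * b i) * this
  calc (∑ i, d i * (a i * b i)) ^ 2
      = (∑ i, (Real.sqrt (d i) * a i) * (Real.sqrt (d i) * b i)) ^ 2 := by
        congr 1; exact Finset.sum_congr rfl (fun i _ => (e1 i).symm)
    _ ≤ (∑ i, (Real.sqrt (d i) * a i) ^ 2) * (∑ i, (Real.sqrt (d i) * b i) ^ 2) := h
    _ = (∑ i, d i * (a i * a i)) * (∑ i, d i * (b i * b i)) := by
        congr 1
        · exact Finset.sum_congr rfl (fun i _ => e2 i)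
        · exact Finset.sum_congr rfl (fun i _ => e3 i)

/-- The projected Bellman operator `F(z) := Π(R + γPz)` with
`Π := Φ(ΦᵀDΦ)⁻¹ΦᵀD` is a `γ`-contraction with respect to `‖·‖_D` on the range
of `Φ`: for all `x, y ∈ ℝⁿ`, `‖F(Φx) − F(Φy)‖_D ≤ γ‖Φx − Φy‖_D`. -/
theorem projected_Bellman_operator_gamma_contraction
    (N n : ℕ) (hN : 0 < N) (hn : 0 < n) (hnN : n ≤ N)
    (P : Matrix (Fin N) (Fin N) ℝ) (d : Fin N → ℝ) (γ : ℝ)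
    (Φ : Matrix (Fin N) (Fin n) ℝ) (R : Fin N → ℝ)
    (hPnonneg : ∀ i j, 0 ≤ P i j)
    (hProw : ∀ i, ∑ j, P i j = 1)
    (hdpos : ∀ s, 0 < d s)
    (hdsum : ∑ s, d s = 1)
    (hstat : Matrix.vecMul d P = d)
    (hγ0 : 0 < γ) (hγ1 : γ < 1)
    (hΦ : Φ.rank = n)
    (x y : Fin n → ℝ) :
    let D : Matrix (Fin N) (Fin N) ℝ := Matrix.diagonal d
    let Proj : Matrix (Fin N) (Fin N) ℝ := Φ * (Φᵀ * D * Φ)⁻¹ * Φᵀ * D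
    let F : (Fin N → ℝ) → (Fin N → ℝ) := fun z => Proj.mulVec (R + γ • P.mulVec z)
    let normD : (Fin N → ℝ) → ℝ := fun v => Real.sqrt (v ⬝ᵥ D.mulVec v)
    normD (F (Φ.mulVec x) - F (Φ.mulVec y)) ≤ γ * normD (Φ.mulVec x - Φ.mulVec y) := by
  intro D Proj F normD
  have hdnn : ∀ i, 0 ≤ d i := fun i => (hdpos i).le
  -- Φ.mulVec is injective
  have hΦinj : Function.Injective Φ.mulVec := by
    have hrank : Module.finrank ℝ (LinearMap.range Φ.mulVecLin) = n := hΦ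
    have hsum := LinearMap.finrank_range_add_finrank_ker Φ.mulVecLin
    rw [hrank, Module.finrank_pi] at hsum
    simp only [Fintype.card_fin] at hsum
    have hker0 : Module.finrank ℝ (LinearMap.ker Φ.mulVecLin) = 0 := by omega
    have hker : LinearMap.ker Φ.mulVecLin = ⊥ := Submodule.finrank_eq_zero.mp hker0
    have := LinearMap.ker_eq_bot.mp hker
    intro u v huv
    exact this (by simpa using huv)
  set M : Matrix (Fin n) (Fin n) ℝ := Φᵀ * D * Φ with hMdef
  -- M is invertible
  have hMinj : Function.Injective M.mulVec := by
    intro u v huv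
    have hc : M.mulVec (u - v) = 0 := by
      rw [Matrix.mulVec_sub, huv, sub_self]
    set c := u - v with hcdef
    have hqc : c ⬝ᵥ M.mulVec c = (Φ.mulVec c) ⬝ᵥ D.mulVec (Φ.mulVec c) := by
      have : M.mulVec c = Φᵀ.mulVec (D.mulVec (Φ.mulVec c)) := by
        rw [Matrix.mulVec_mulVec, Matrix.mulVec_mulVec, hMdef]
      rw [this, Matrix.dotProduct_mulVec, Matrix.vecMul_transpose]
    have hzero : (Φ.mulVec c) ⬝ᵥ D.mulVec (Φ.mulVec c) = 0 := by
      rw [← hqc, hc, dotProduct_zero]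
    have hsum0 : ∑ i, d i * (Φ.mulVec c i * Φ.mulVec c i) = 0 := by
      rw [← qf_diag]; exact hzero
    have hΦc : Φ.mulVec c = 0 := by
      funext i
      have hnn : ∀ i ∈ Finset.univ, (0:ℝ) ≤ d i * (Φ.mulVec c i * Φ.mulVec c i) := by
        intro i _; exact mul_nonneg (hdnn i) (mul_self_nonneg _)
      have := (Finset.sum_eq_zero_iff_of_nonneg hnn).mp hsum0 i (Finset.mem_univ i)
      have hdi := hdpos i
      have : Φ.mulVec c i * Φ.mulVec c i = 0 := by
        by_contra h
        exact h (by nlinarith [mul_self_nonneg (Φ.mulVec c i)])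
      simpa using mul_self_eq_zero.mp this
    have : Φ.mulVec u = Φ.mulVec v := by
      have h2 := Matrix.mulVec_sub Φ u v
      rw [← hcdef, hΦc] at h2
      exact (sub_eq_zero.mp h2.symm)
    exact hΦinj this
  have hMunit : IsUnit M := Matrix.mulVec_injective_iff_isUnit.mp hMinj
  have hMdetu : IsUnit M.det := (Matrix.isUnit_iff_isUnit_det M).mp hMunit
  have hMinvM : M⁻¹ * M = 1 := Matrix.nonsing_inv_mul M hMdetu
  have hDT : Dᵀ = D := Matrix.diagonal_transpose d
  have hMT : Mᵀ = M := by
    rw [hMdef, Matrix.transpose_mul, Matrix.transpose_mul, Matrix.transpose_transpose, hDT,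
      Matrix.mul_assoc]
  have hMinvT : (M⁻¹)ᵀ = M⁻¹ := by rw [Matrix.transpose_nonsing_inv, hMT]
  have hProjdef : Proj = Φ * M⁻¹ * Φᵀ * D := rfl
  have hcancel : ∀ (A : Matrix (Fin n) (Fin N) ℝ), M⁻¹ * (Φᵀ * (D * (Φ * A))) = A := by
    intro A
    have h : Φᵀ * (D * (Φ * A)) = M * A := by
      rw [hMdef]; simp only [Matrix.mul_assoc]
    rw [h, ← Matrix.mul_assoc, hMinvM, Matrix.one_mul]
  have hPT : Projᵀ = D * (Φ * (M⁻¹ * Φᵀ)) := by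
    rw [hProjdef, Matrix.transpose_mul, hDT, Matrix.transpose_mul, Matrix.transpose_mul,
      hMinvT, Matrix.transpose_transpose]
  have hkey : Projᵀ * (D * Proj) = D * Proj := by
    calc Projᵀ * (D * Proj)
        = D * (Φ * (M⁻¹ * (Φᵀ * (D * (Φ * (M⁻¹ * (Φᵀ * D))))))) := by
          rw [hPT, hProjdef]; simp only [Matrix.mul_assoc]
      _ = D * (Φ * (M⁻¹ * (Φᵀ * D))) := by rw [hcancel]
      _ = D * Proj := by rw [hProjdef]; simp only [Matrix.mul_assoc]
  -- nonnegativity of the quadratic form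
  have hqfnn : ∀ v : Fin N → ℝ, 0 ≤ v ⬝ᵥ D.mulVec v := by
    intro v
    rw [qf_diag]
    exact Finset.sum_nonneg fun i _ => mul_nonneg (hdnn i) (mul_self_nonneg _)
  -- the projection is non-expansive for the quadratic form
  have hProjqf : ∀ v : Fin N → ℝ,
      (Proj.mulVec v) ⬝ᵥ D.mulVec (Proj.mulVec v) ≤ v ⬝ᵥ D.mulVec v := by
    intro v
    set w := Proj.mulVec v with hw
    have h1 : w ⬝ᵥ D.mulVec w = v ⬝ᵥ D.mulVec w := by
      have l1 : D.mulVec w = (D * Proj).mulVec v := by rw [hw, Matrix.mulVec_mulVec]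
      rw [l1, Matrix.dotProduct_mulVec, Matrix.dotProduct_mulVec, hw,
        ← Matrix.vecMul_transpose, Matrix.vecMul_vecMul, hkey]
    have h2 : (v ⬝ᵥ D.mulVec w) ^ 2 ≤ (v ⬝ᵥ D.mulVec v) * (w ⬝ᵥ D.mulVec w) := by
      rw [qf_diag, qf_diag, qf_diag]
      exact cs_weighted d v w hdnn
    have hwnn : 0 ≤ w ⬝ᵥ D.mulVec w := hqfnn w
    rcases eq_or_lt_of_le hwnn with h0 | h0
    · rw [← h0]; exact hqfnn v
    · rw [← h1] at h2
      nlinarith [h0, h2]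
  -- P is non-expansive for the quadratic form
  have hPqf : ∀ v : Fin N → ℝ,
      (P.mulVec v) ⬝ᵥ D.mulVec (P.mulVec v) ≤ v ⬝ᵥ D.mulVec v := by
    intro v
    rw [qf_diag, qf_diag]
    have hmv : ∀ i, P.mulVec v i = ∑ j, P i j * v j := by
      intro i; simp [Matrix.mulVec, dotProduct]
    have hrow : ∀ i, P.mulVec v i * P.mulVec v i ≤ ∑ j, P i j * (v j * v j) := by
      intro i
      have h := cs_weighted (P i) (fun _ => (1:ℝ)) v (fun j => hPnonneg i j)
      simp only [one_mul, mul_one] at h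
      rw [hProw i, one_mul] at h
      have he : P.mulVec v i * P.mulVec v i = (∑ j, P i j * v j) ^ 2 := by
        rw [hmv i]; ring
      rw [he]
      exact h
    calc ∑ i, d i * (P.mulVec v i * P.mulVec v i)
        ≤ ∑ i, d i * ∑ j, P i j * (v j * v j) := by
          exact Finset.sum_le_sum fun i _ =>
            mul_le_mul_of_nonneg_left (hrow i) (hdnn i)
      _ = ∑ j, (∑ i, d i * P i j) * (v j * v j) := by
          simp_rw [Finset.mul_sum, Finset.sum_mul]
          rw [Finset.sum_comm]
          exact Finset.sum_congr rfl fun j _ => Finset.sum_congr rfl fun i _ => by ring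
      _ = ∑ j, d j * (v j * v j) := by
          refine Finset.sum_congr rfl fun j _ => ?_
          have : (∑ i, d i * P i j) = d j := by
            have := congrFun hstat j
            simpa [Matrix.vecMul, dotProduct] using this
          rw [this]
  -- difference of the operator values
  set z := Φ.mulVec x - Φ.mulVec y with hz
  have hFdiff : F (Φ.mulVec x) - F (Φ.mulVec y) = γ • Proj.mulVec (P.mulVec z) := by
    show Proj.mulVec (R + γ • P.mulVec (Φ.mulVec x)) -
        Proj.mulVec (R + γ • P.mulVec (Φ.mulVec y)) = _
    rw [← Matrix.mulVec_sub]
    have : (R + γ • P.mulVec (Φ.mulVec x)) - (R + γ • P.mulVec (Φ.mulVec y))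
        = γ • P.mulVec z := by
      rw [hz, Matrix.mulVec_sub, smul_sub]
      abel
    rw [this, Matrix.mulVec_smul]
  have hnormsmul : ∀ u : Fin N → ℝ, normD (γ • u) = γ * normD u := by
    intro u
    show Real.sqrt ((γ • u) ⬝ᵥ D.mulVec (γ • u)) = γ * Real.sqrt (u ⬝ᵥ D.mulVec u)
    have : (γ • u) ⬝ᵥ D.mulVec (γ • u) = γ ^ 2 * (u ⬝ᵥ D.mulVec u) := by
      rw [qf_diag, qf_diag, Finset.mul_sum]
      exact Finset.sum_congr rfl fun i _ => by simp [Pi.smul_apply, smul_eq_mul]; ring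
    rw [this, Real.sqrt_mul (sq_nonneg γ), Real.sqrt_sq hγ0.le]
  rw [hFdiff, hnormsmul]
  refine mul_le_mul_of_nonneg_left ?_ hγ0.le
  exact Real.sqrt_le_sqrt (le_trans (hProjqf (P.mulVec z)) (hPqf z))
end

section
/- Let (Ω, ℱ, ℙ) be a probability space, T a positive integer, ε_1, …, ε_T ≥ 0, and θ_0, θ_1, …, θ_T : Ω → ℝⁿ square-integrable random vectors satisfying 𝔼[‖θ_{k+1} − G(θ_k)‖₂²] ≤ ε_{k+1} for all k = 0, 1, …, T−1, where G(θ) := (ΦᵀDΦ)⁻¹ΦᵀD(R + γPΦθ). Then 𝔼[‖Φθ_T − Φθ*‖_D] ≤ √(λ_max(ΦᵀDΦ)) · ∑_{k=1}^{T} γ^{T−k}√(ε_k) + γ^T 𝔼[‖Φθ_0 − Φθ*‖_D], where θ* := −(ΦᵀD(γP − I)Φ)⁻¹ΦᵀDR. -/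
/-!
Writing `‖x‖_D = ‖(√d_s x_s)_s‖₂` turns the `D`-weighted norm into a Euclidean one. `ΦG(θ)` is
the `D`-orthogonal projection of `R + γPΦθ` onto `range Φ`; since the projection is nonexpansive
and so is `P` for its stationary distribution `d` (Jensen on each row), `G` is a `γ`-contraction
in `‖Φ ·‖_D` with fixed point `θ*`. Hence, pointwise,
`‖Φθ_{k+1} − Φθ*‖_D ≤ ‖Φ(θ_{k+1} − Gθ_k)‖_D + γ‖Φθ_k − Φθ*‖_D`, the first term being at most
`√λ_max · ‖θ_{k+1} − Gθ_k‖₂`. Taking expectations, `𝔼‖·‖₂ ≤ √(𝔼‖·‖₂²) ≤ √ε_{k+1}`, and unrolling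
the recursion gives the bound.
-/

open Matrix MeasureTheory ProbabilityTheory

theorem Matrix.mulVec_injective_of_rank_eq {K ι κ : Type*} [Field K] [Fintype ι] [Fintype κ]
    {A : Matrix ι κ K} (hA : A.rank = Fintype.card κ) : Function.Injective A.mulVec := by
  have h := A.mulVecLin.finrank_range_add_finrank_ker
  rw [Module.finrank_fintype_fun_eq_card] at h
  have hker : LinearMap.ker A.mulVecLin = ⊥ :=
    Submodule.finrank_eq_zero.mp (by unfold Matrix.rank at hA; omega)
  exact LinearMap.ker_eq_bot.mp hker

theorem Matrix.dotProduct_transpose_mul_mulVec {R ι κ m : Type*} [CommSemiring R] [Fintype ι]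
    [Fintype κ] [Fintype m] (Φ : Matrix ι κ R) (M : Matrix ι m R) (w : κ → R) (y : m → R) :
    w ⬝ᵥ (Φᵀ * M) *ᵥ y = (Φ *ᵥ w) ⬝ᵥ M *ᵥ y := by
  rw [← mulVec_mulVec, dotProduct_mulVec w Φᵀ, vecMul_transpose]

open scoped MatrixOrder in
theorem Matrix.IsHermitian.dotProduct_mulVec_le_iSup_eigenvalues_mul {κ : Type*} [Fintype κ]
    [DecidableEq κ] {A : Matrix κ κ ℝ} (hA : A.IsHermitian) (x : κ → ℝ) :
    x ⬝ᵥ A *ᵥ x ≤ (⨆ i, hA.eigenvalues i) * (x ⬝ᵥ x) := by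
  have hle : A ≤ algebraMap ℝ (Matrix κ κ ℝ) (⨆ i, hA.eigenvalues i) := by
    refine le_algebraMap_of_spectrum_le ?_ hA.isSelfAdjoint
    rw [hA.spectrum_real_eq_range_eigenvalues]
    rintro _ ⟨i, rfl⟩
    exact le_ciSup (Set.finite_range _).bddAbove i
  simpa [sub_mulVec, Algebra.algebraMap_eq_smul_one, smul_mulVec, dotProduct_sub] using
    (Matrix.le_iff.mp hle).dotProduct_mulVec_nonneg x

theorem le_sum_Icc_geom_of_le_add_mul {γ : ℝ} (hγ : 0 ≤ γ) {a b : ℕ → ℝ} {T : ℕ}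
    (h : ∀ k < T, a (k + 1) ≤ b (k + 1) + γ * a k) :
    a T ≤ ∑ k ∈ Finset.Icc 1 T, γ ^ (T - k) * b k + γ ^ T * a 0 := by
  induction T with
  | zero => simp
  | succ T ih =>
    have hsum : ∑ k ∈ Finset.Icc 1 (T + 1), γ ^ (T + 1 - k) * b k =
        b (T + 1) + γ * ∑ k ∈ Finset.Icc 1 T, γ ^ (T - k) * b k := by
      rw [Finset.sum_Icc_succ_top (by omega), Finset.mul_sum, Nat.sub_self, pow_zero, one_mul,
        add_comm]
      congr 1
      refine Finset.sum_congr rfl fun k hk => ?_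
      rw [Nat.sub_add_comm (Finset.mem_Icc.mp hk).2, pow_succ]
      ring
    calc a (T + 1) ≤ b (T + 1) + γ * a T := h T T.lt_succ_self
      _ ≤ b (T + 1) + γ * (∑ k ∈ Finset.Icc 1 T, γ ^ (T - k) * b k + γ ^ T * a 0) := by
        gcongr; exact ih fun k hk => h k (hk.trans T.lt_succ_self)
      _ = _ := by rw [hsum, pow_succ]; ring

section Probability

variable {Ω : Type*} [MeasurableSpace Ω] {μ : Measure Ω}

theorem integral_le_sqrt_integral_sq [IsProbabilityMeasure μ] {g : Ω → ℝ} (hg : MemLp g 2 μ) :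
    ∫ ω, g ω ∂μ ≤ √(∫ ω, g ω ^ 2 ∂μ) := by
  refine Real.le_sqrt_of_sq_le ?_
  have := variance_nonneg g μ
  rw [variance_eq_sub hg, sub_nonneg] at this
  exact this

theorem MeasureTheory.MemLp.linearMap_add [IsFiniteMeasure μ] {E F : Type*}
    [NormedAddCommGroup E] [NormedSpace ℝ E] [FiniteDimensional ℝ E] [NormedAddCommGroup F]
    [NormedSpace ℝ F] {p : ENNReal} {f : Ω → E} (hf : MemLp f p μ) (L : E →ₗ[ℝ] F) (c : F) :
    MemLp (fun ω => L (f ω) + c) p μ :=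
  (L.toContinuousLinearMap.comp_memLp' hf).add (memLp_const c)

end Probability

section SqrtWeight

variable {ι : Type*}

noncomputable def sqrtWeight (d : ι → ℝ) : (ι → ℝ) →ₗ[ℝ] EuclideanSpace ℝ ι where
  toFun x := WithLp.toLp 2 fun s => √(d s) * x s
  map_add' x y := by ext s; simp [mul_add]
  map_smul' c x := by ext s; simp [mul_left_comm]

variable {d : ι → ℝ}

theorem sqrtWeight_injective (hd : ∀ s, 0 < d s) : Function.Injective (sqrtWeight d) := by
  refine (injective_iff_map_eq_zero _).mpr fun x hx => funext fun s => ?_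
  simpa [sqrtWeight, (Real.sqrt_pos.mpr (hd s)).ne'] using congrArg (· s) hx

variable [Fintype ι]

theorem inner_sqrtWeight [DecidableEq ι] (hd : ∀ s, 0 ≤ d s) (x y : ι → ℝ) :
    inner ℝ (sqrtWeight d x) (sqrtWeight d y) = x ⬝ᵥ diagonal d *ᵥ y := by
  simp only [sqrtWeight, LinearMap.coe_mk, AddHom.coe_mk, PiLp.inner_apply, dotProduct,
    mulVec_diagonal]
  refine Finset.sum_congr rfl fun s _ => ?_
  simp only [RCLike.inner_apply, conj_trivial]
  linear_combination (x s * y s) * Real.mul_self_sqrt (hd s)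

theorem sqrt_dotProduct_diagonal_mulVec [DecidableEq ι] (hd : ∀ s, 0 ≤ d s) (x : ι → ℝ) :
    √(x ⬝ᵥ diagonal d *ᵥ x) = ‖sqrtWeight d x‖ := by
  rw [← inner_sqrtWeight hd, real_inner_self_eq_norm_sq, Real.sqrt_sq (norm_nonneg _)]

theorem norm_sqrtWeight_sq (hd : ∀ s, 0 ≤ d s) (x : ι → ℝ) :
    ‖sqrtWeight d x‖ ^ 2 = ∑ s, d s * x s ^ 2 := by
  simp [sqrtWeight, EuclideanSpace.real_norm_sq_eq, mul_pow, Real.sq_sqrt (hd _)]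

theorem norm_sqrtWeight_mulVec_le [DecidableEq ι] {P : Matrix ι ι ℝ}
    (hP : P ∈ rowStochastic ℝ ι) (hd : ∀ s, 0 ≤ d s) (hstat : d ᵥ* P = d) (x : ι → ℝ) :
    ‖sqrtWeight d (P *ᵥ x)‖ ≤ ‖sqrtWeight d x‖ := by
  have hrow (s : ι) : (P *ᵥ x) s ^ 2 ≤ (P *ᵥ fun j => x j ^ 2) s :=
    even_two.convexOn_pow.map_sum_le (fun j _ => hP.1 s j) (sum_row_of_mem_rowStochastic hP s)
      (fun _ _ => Set.mem_univ _)
  rw [← sq_le_sq₀ (norm_nonneg _) (norm_nonneg _), norm_sqrtWeight_sq hd, norm_sqrtWeight_sq hd]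
  calc ∑ s, d s * (P *ᵥ x) s ^ 2 ≤ d ⬝ᵥ P *ᵥ fun j => x j ^ 2 :=
        Finset.sum_le_sum fun s _ => mul_le_mul_of_nonneg_left (hrow s) (hd s)
    _ = ∑ s, d s * x s ^ 2 := by rw [dotProduct_mulVec, hstat]; rfl

end SqrtWeight

section ProjectedBellman

variable {ι κ : Type*} [Fintype ι] [DecidableEq ι] [Fintype κ] [DecidableEq κ]
  (P : Matrix ι ι ℝ) (d : ι → ℝ) (γ : ℝ) (Φ : Matrix ι κ ℝ) (R : ι → ℝ)

/-- The map `G` of the paper. -/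
noncomputable def projectedBellman (θ : κ → ℝ) : κ → ℝ :=
  (Φᵀ * diagonal d * Φ)⁻¹ *ᵥ ((Φᵀ * diagonal d) *ᵥ (R + γ • P *ᵥ (Φ *ᵥ θ)))

/-- The solution `θ*` of the projected Bellman equation, in the closed form of the paper. -/
noncomputable def tdFixedPoint : κ → ℝ :=
  -((Φᵀ * diagonal d * (γ • P - 1) * Φ)⁻¹ *ᵥ ((Φᵀ * diagonal d) *ᵥ R))

variable {P d γ Φ R}

theorem isUnit_det_transpose_mul_diagonal_mul (hd : ∀ s, 0 < d s)
    (hΦ : Function.Injective Φ.mulVec) : IsUnit (Φᵀ * diagonal d * Φ).det := by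
  rw [← isUnit_iff_isUnit_det]
  simpa using ((PosDef.diagonal hd).conjTranspose_mul_mul_same hΦ).isUnit

theorem norm_sqrtWeight_projection_le (hd : ∀ s, 0 ≤ d s)
    (hA : IsUnit (Φᵀ * diagonal d * Φ).det) (x : ι → ℝ) :
    ‖sqrtWeight d (Φ *ᵥ ((Φᵀ * diagonal d * Φ)⁻¹ *ᵥ ((Φᵀ * diagonal d) *ᵥ x)))‖ ≤
      ‖sqrtWeight d x‖ := by
  set w := (Φᵀ * diagonal d * Φ)⁻¹ *ᵥ ((Φᵀ * diagonal d) *ᵥ x)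
  have hnormal : (Φᵀ * diagonal d) *ᵥ (Φ *ᵥ w) = (Φᵀ * diagonal d) *ᵥ x := by
    rw [mulVec_mulVec, mulVec_mulVec, mul_nonsing_inv _ hA, one_mulVec]
  have horth : inner ℝ (sqrtWeight d (Φ *ᵥ w)) (sqrtWeight d (x - Φ *ᵥ w)) = 0 := by
    rw [inner_sqrtWeight hd, ← dotProduct_transpose_mul_mulVec, mulVec_sub, hnormal, sub_self,
      dotProduct_zero]
  have hpyth := norm_add_sq_eq_norm_sq_add_norm_sq_real horth
  rw [← map_add, add_sub_cancel] at hpyth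
  nlinarith [norm_nonneg (sqrtWeight d x), norm_nonneg (sqrtWeight d (Φ *ᵥ w)),
    mul_self_nonneg ‖sqrtWeight d (x - Φ *ᵥ w)‖]

theorem isUnit_det_transpose_mul_diagonal_mul_bellman (hP : P ∈ rowStochastic ℝ ι)
    (hd : ∀ s, 0 < d s) (hstat : d ᵥ* P = d) (hγ0 : 0 ≤ γ) (hγ1 : γ < 1)
    (hΦ : Function.Injective Φ.mulVec) :
    IsUnit (Φᵀ * diagonal d * (γ • P - 1) * Φ).det := by
  refine (isUnit_iff_isUnit_det _).mp (mulVec_injective_iff_isUnit.mp ?_)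
  refine (injective_iff_map_eq_zero (mulVecLin _)).mpr fun v hv => hΦ ?_
  set x := Φ *ᵥ v
  have hquad : 0 = γ * inner ℝ (sqrtWeight d x) (sqrtWeight d (P *ᵥ x)) - ‖sqrtWeight d x‖ ^ 2 := by
    have : v ⬝ᵥ (Φᵀ * diagonal d * (γ • P - 1) * Φ) *ᵥ v = 0 := by
      rw [← mulVecLin_apply, hv, dotProduct_zero]
    rw [← this, Matrix.mul_assoc Φᵀ, ← mulVec_mulVec, dotProduct_transpose_mul_mulVec,
      ← mulVec_mulVec, ← inner_sqrtWeight (fun s => (hd s).le), sub_mulVec, smul_mulVec,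
      one_mulVec, map_sub, map_smul, inner_sub_right, inner_smul_right,
      real_inner_self_eq_norm_sq]
  have hcs := real_inner_le_norm (sqrtWeight d x) (sqrtWeight d (P *ᵥ x))
  have hPx := norm_sqrtWeight_mulVec_le hP (fun s => (hd s).le) hstat x
  have hle : ‖sqrtWeight d x‖ ^ 2 ≤ γ * ‖sqrtWeight d x‖ ^ 2 := by
    have := mul_le_mul_of_nonneg_left
      (hcs.trans (mul_le_mul_of_nonneg_left hPx (norm_nonneg _))) hγ0
    nlinarith
  have hx : ‖sqrtWeight d x‖ ^ 2 = 0 := le_antisymm (by nlinarith) (sq_nonneg _)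
  rw [mulVec_zero]
  exact sqrtWeight_injective hd (by
    rw [norm_eq_zero.mp (pow_eq_zero_iff two_ne_zero |>.mp hx), map_zero])

theorem projectedBellman_tdFixedPoint (hA : IsUnit (Φᵀ * diagonal d * Φ).det)
    (hB : IsUnit (Φᵀ * diagonal d * (γ • P - 1) * Φ).det) :
    projectedBellman P d γ Φ R (tdFixedPoint P d γ Φ R) = tdFixedPoint P d γ Φ R := by
  set θ := tdFixedPoint P d γ Φ R with hθ
  have hBθ : (Φᵀ * diagonal d * (γ • P - 1) * Φ) *ᵥ θ = -((Φᵀ * diagonal d) *ᵥ R) := by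
    rw [hθ, tdFixedPoint, mulVec_neg, mulVec_mulVec, mul_nonsing_inv _ hB, one_mulVec]
  have hAθ : (Φᵀ * diagonal d * Φ) *ᵥ θ = (Φᵀ * diagonal d) *ᵥ (R + γ • P *ᵥ (Φ *ᵥ θ)) := by
    simp only [Matrix.mul_sub, Matrix.sub_mul, Matrix.mul_smul, Matrix.smul_mul, Matrix.mul_one,
      sub_mulVec, smul_mulVec] at hBθ
    simp only [mulVec_add, mulVec_smul, mulVec_mulVec, Matrix.mul_assoc] at hBθ ⊢
    linear_combination (norm := module) -hBθ
  rw [projectedBellman, ← hAθ, mulVec_mulVec, nonsing_inv_mul _ hA, one_mulVec]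

theorem projectedBellman_sub (θ θ' : κ → ℝ) :
    projectedBellman P d γ Φ R θ - projectedBellman P d γ Φ R θ' =
      (Φᵀ * diagonal d * Φ)⁻¹ *ᵥ ((Φᵀ * diagonal d) *ᵥ (γ • P *ᵥ (Φ *ᵥ (θ - θ')))) := by
  simp only [projectedBellman, mulVec_sub, mulVec_add, mulVec_smul, smul_sub]
  abel

theorem norm_sqrtWeight_projectedBellman_sub_le (hP : P ∈ rowStochastic ℝ ι)
    (hd : ∀ s, 0 ≤ d s) (hstat : d ᵥ* P = d) (hγ0 : 0 ≤ γ)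
    (hA : IsUnit (Φᵀ * diagonal d * Φ).det) (θ θ' : κ → ℝ) :
    ‖sqrtWeight d (Φ *ᵥ (projectedBellman P d γ Φ R θ - projectedBellman P d γ Φ R θ'))‖ ≤
      γ * ‖sqrtWeight d (Φ *ᵥ (θ - θ'))‖ := by
  rw [projectedBellman_sub]
  calc _ ≤ ‖sqrtWeight d (γ • P *ᵥ (Φ *ᵥ (θ - θ')))‖ := norm_sqrtWeight_projection_le hd hA _
    _ = γ * ‖sqrtWeight d (P *ᵥ (Φ *ᵥ (θ - θ')))‖ := by
      rw [map_smul, norm_smul, Real.norm_of_nonneg hγ0]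
    _ ≤ γ * ‖sqrtWeight d (Φ *ᵥ (θ - θ'))‖ :=
      mul_le_mul_of_nonneg_left (norm_sqrtWeight_mulVec_le hP hd hstat _) hγ0

theorem norm_sqrtWeight_mulVec_le_sqrt_iSup_eigenvalues (hd : ∀ s, 0 ≤ d s)
    (hA : (Φᵀ * diagonal d * Φ).IsHermitian) (v : κ → ℝ) :
    ‖sqrtWeight d (Φ *ᵥ v)‖ ≤ √(⨆ i, hA.eigenvalues i) * ‖WithLp.toLp 2 v‖ := by
  have hsq : ‖sqrtWeight d (Φ *ᵥ v)‖ ^ 2 ≤ (⨆ i, hA.eigenvalues i) * ‖WithLp.toLp 2 v‖ ^ 2 := by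
    rw [← real_inner_self_eq_norm_sq, ← real_inner_self_eq_norm_sq, inner_sqrtWeight hd,
      ← dotProduct_transpose_mul_mulVec, mulVec_mulVec, EuclideanSpace.inner_toLp_toLp,
      star_trivial]
    exact hA.dotProduct_mulVec_le_iSup_eigenvalues_mul v
  calc ‖sqrtWeight d (Φ *ᵥ v)‖ = √(‖sqrtWeight d (Φ *ᵥ v)‖ ^ 2) :=
        (Real.sqrt_sq (norm_nonneg _)).symm
    _ ≤ √((⨆ i, hA.eigenvalues i) * ‖WithLp.toLp 2 v‖ ^ 2) := Real.sqrt_le_sqrt hsq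
    _ = √(⨆ i, hA.eigenvalues i) * ‖WithLp.toLp 2 v‖ := by
      rw [Real.sqrt_mul' _ (sq_nonneg _), Real.sqrt_sq (norm_nonneg _)]

theorem norm_sqrtWeight_sub_tdFixedPoint_le (hP : P ∈ rowStochastic ℝ ι)
    (hd : ∀ s, 0 ≤ d s) (hstat : d ᵥ* P = d) (hγ0 : 0 ≤ γ)
    (hA : IsUnit (Φᵀ * diagonal d * Φ).det)
    (hB : IsUnit (Φᵀ * diagonal d * (γ • P - 1) * Φ).det)
    (hHerm : (Φᵀ * diagonal d * Φ).IsHermitian) (θ θ' : κ → ℝ) :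
    ‖sqrtWeight d (Φ *ᵥ (θ' - tdFixedPoint P d γ Φ R))‖ ≤
      √(⨆ i, hHerm.eigenvalues i) * ‖WithLp.toLp 2 (θ' - projectedBellman P d γ Φ R θ)‖ +
        γ * ‖sqrtWeight d (Φ *ᵥ (θ - tdFixedPoint P d γ Φ R))‖ := by
  set θstar := tdFixedPoint P d γ Φ R
  set G := projectedBellman P d γ Φ R
  have hfix : G θstar = θstar := projectedBellman_tdFixedPoint hA hB
  have hsplit : θ' - θstar = (θ' - G θ) + (G θ - G θstar) := by rw [hfix]; abel
  calc ‖sqrtWeight d (Φ *ᵥ (θ' - θstar))‖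
      ≤ ‖sqrtWeight d (Φ *ᵥ (θ' - G θ))‖ + ‖sqrtWeight d (Φ *ᵥ (G θ - G θstar))‖ := by
        rw [hsplit, mulVec_add, map_add]; exact norm_add_le _ _
    _ ≤ _ := add_le_add (norm_sqrtWeight_mulVec_le_sqrt_iSup_eigenvalues hd hHerm _)
        (norm_sqrtWeight_projectedBellman_sub_le hP hd hstat hγ0 hA θ θstar)

variable {Ω : Type*} [MeasurableSpace Ω] {μ : Measure Ω}

theorem memLp_projectedBellman [IsFiniteMeasure μ] {θ : Ω → κ → ℝ} (hθ : MemLp θ 2 μ) :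
    MemLp (fun ω => projectedBellman P d γ Φ R (θ ω)) 2 μ := by
  let L := (Φᵀ * diagonal d * Φ)⁻¹.mulVecLin ∘ₗ (Φᵀ * diagonal d).mulVecLin ∘ₗ
    (γ • P.mulVecLin) ∘ₗ Φ.mulVecLin
  have hG (v : κ → ℝ) : projectedBellman P d γ Φ R v = L v + projectedBellman P d γ Φ R 0 := by
    rw [← sub_eq_iff_eq_add, projectedBellman_sub, sub_zero]; rfl
  exact (hθ.linearMap_add L _).ae_eq (ae_of_all _ fun ω => (hG (θ ω)).symm)

theorem integral_norm_sqrtWeight_sub_tdFixedPoint_le [IsProbabilityMeasure μ]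
    (hP : P ∈ rowStochastic ℝ ι) (hd : ∀ s, 0 ≤ d s) (hstat : d ᵥ* P = d) (hγ0 : 0 ≤ γ)
    (hA : IsUnit (Φᵀ * diagonal d * Φ).det)
    (hB : IsUnit (Φᵀ * diagonal d * (γ • P - 1) * Φ).det)
    (hHerm : (Φᵀ * diagonal d * Φ).IsHermitian) {θ θ' : Ω → κ → ℝ}
    (hθ : MemLp θ 2 μ) (hθ' : MemLp θ' 2 μ) {e : ℝ}
    (he : ∫ ω, ∑ i, (θ' ω i - projectedBellman P d γ Φ R (θ ω) i) ^ 2 ∂μ ≤ e) :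
    ∫ ω, ‖sqrtWeight d (Φ *ᵥ (θ' ω - tdFixedPoint P d γ Φ R))‖ ∂μ ≤
      √(⨆ i, hHerm.eigenvalues i) * √e +
        γ * ∫ ω, ‖sqrtWeight d (Φ *ᵥ (θ ω - tdFixedPoint P d γ Φ R))‖ ∂μ := by
  set θstar := tdFixedPoint P d γ Φ R
  have hX {f : Ω → κ → ℝ} (hf : MemLp f 2 μ) :
      Integrable (fun ω => ‖sqrtWeight d (Φ *ᵥ (f ω - θstar))‖) μ := by
    have := hf.linearMap_add (sqrtWeight d ∘ₗ Φ.mulVecLin) (-sqrtWeight d (Φ *ᵥ θstar))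
    refine (this.norm.integrable one_le_two).congr (ae_of_all _ fun ω => ?_)
    simp only [LinearMap.comp_apply, mulVecLin_apply, sub_eq_add_neg, mulVec_add, mulVec_neg,
      map_add, map_neg]
  set Y := fun ω => ‖WithLp.toLp 2 (θ' ω - projectedBellman P d γ Φ R (θ ω))‖
  have hY : MemLp Y 2 μ :=
    (MemLp.of_eval_piLp fun i => (hθ'.sub (memLp_projectedBellman hθ)).eval i).norm
  have hEY : ∫ ω, Y ω ∂μ ≤ √e := by
    refine (integral_le_sqrt_integral_sq hY).trans (Real.sqrt_le_sqrt (le_of_eq_of_le ?_ he))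
    simp [Y, EuclideanSpace.real_norm_sq_eq]
  calc ∫ ω, ‖sqrtWeight d (Φ *ᵥ (θ' ω - θstar))‖ ∂μ
      ≤ ∫ ω, √(⨆ i, hHerm.eigenvalues i) * Y ω + γ * ‖sqrtWeight d (Φ *ᵥ (θ ω - θstar))‖ ∂μ :=
        integral_mono (hX hθ') (((hY.integrable one_le_two).const_mul _).add ((hX hθ).const_mul _))
          fun ω => norm_sqrtWeight_sub_tdFixedPoint_le hP hd hstat hγ0 hA hB hHerm (θ ω) (θ' ω)
    _ = √(⨆ i, hHerm.eigenvalues i) * ∫ ω, Y ω ∂μ +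
          γ * ∫ ω, ‖sqrtWeight d (Φ *ᵥ (θ ω - θstar))‖ ∂μ := by
        rw [integral_add ((hY.integrable one_le_two).const_mul _) ((hX hθ).const_mul _),
          integral_const_mul, integral_const_mul]
    _ ≤ _ := by gcongr

end ProjectedBellman

theorem periodic_TD_expected_error_bound_general
    (N n : ℕ)
    (P : Matrix (Fin N) (Fin N) ℝ) (d : Fin N → ℝ) (γ : ℝ)
    (Φ : Matrix (Fin N) (Fin n) ℝ) (R : Fin N → ℝ)
    (hPnonneg : ∀ i j, 0 ≤ P i j)
    (hProw : ∀ i, ∑ j, P i j = 1)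
    (hdpos : ∀ s, 0 < d s)
    (hstat : Matrix.vecMul d P = d)
    (hγ0 : 0 < γ) (hγ1 : γ < 1)
    (hΦ : Φ.rank = n)
    (hHerm : (Φᵀ * Matrix.diagonal d * Φ).IsHermitian)
    {Ω : Type*} [MeasurableSpace Ω] (Pr : Measure Ω) [IsProbabilityMeasure Pr]
    (T : ℕ)
    (ε : ℕ → ℝ)
    (θ : ℕ → Ω → Fin n → ℝ)
    (hL2 : ∀ k ≤ T, ∀ i, MemLp (fun ω => θ k ω i) 2 Pr)
    (hrec : ∀ k < T,
      (∫ ω, (∑ i, (θ (k + 1) ω i -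
        ((Φᵀ * Matrix.diagonal d * Φ)⁻¹.mulVec
          ((Φᵀ * Matrix.diagonal d).mulVec
            (R + γ • P.mulVec (Φ.mulVec (θ k ω))))) i) ^ 2) ∂Pr) ≤ ε (k + 1)) :
    let D : Matrix (Fin N) (Fin N) ℝ := Matrix.diagonal d
    let normD : (Fin N → ℝ) → ℝ := fun v => Real.sqrt (v ⬝ᵥ D.mulVec v)
    let θstar : Fin n → ℝ :=
      -((Φᵀ * D * (γ • P - 1) * Φ)⁻¹.mulVec ((Φᵀ * D).mulVec R))
    (∫ ω, normD (Φ.mulVec (θ T ω) - Φ.mulVec θstar) ∂Pr) ≤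
      Real.sqrt (⨆ i, hHerm.eigenvalues i) *
        (∑ k ∈ Finset.Icc 1 T, γ ^ (T - k) * Real.sqrt (ε k)) +
      γ ^ T * (∫ ω, normD (Φ.mulVec (θ 0 ω) - Φ.mulVec θstar) ∂Pr) := by
  intro D normD θstar
  have hd (s : Fin N) : 0 ≤ d s := (hdpos s).le
  have hP : P ∈ rowStochastic ℝ (Fin N) := mem_rowStochastic_iff_sum.mpr ⟨hPnonneg, hProw⟩
  have hΦinj : Function.Injective Φ.mulVec := mulVec_injective_of_rank_eq (by simpa using hΦ)
  have hA := isUnit_det_transpose_mul_diagonal_mul hdpos hΦinj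
  have hB := isUnit_det_transpose_mul_diagonal_mul_bellman hP hdpos hstat hγ0.le hγ1 hΦinj
  have hnormD (k : ℕ) (ω : Ω) : normD (Φ *ᵥ θ k ω - Φ *ᵥ θstar) =
      ‖sqrtWeight d (Φ *ᵥ (θ k ω - tdFixedPoint P d γ Φ R))‖ := by
    rw [← mulVec_sub]
    exact sqrt_dotProduct_diagonal_mulVec hd _
  simp only [hnormD, Finset.mul_sum, mul_left_comm √(⨆ i, hHerm.eigenvalues i)]
  refine le_sum_Icc_geom_of_le_add_mul hγ0.le
    (a := fun k => ∫ ω, ‖sqrtWeight d (Φ *ᵥ (θ k ω - tdFixedPoint P d γ Φ R))‖ ∂Pr) fun k hk => ?_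
  exact integral_norm_sqrtWeight_sub_tdFixedPoint_le hP hd hstat hγ0.le hA hB hHerm
    (MemLp.of_eval (hL2 k hk.le)) (MemLp.of_eval (hL2 (k + 1) hk)) (hrec k hk)

/-- If the square-integrable random vectors `θ_0, …, θ_T` satisfy
`𝔼[‖θ_{k+1} − G(θ_k)‖₂²] ≤ ε_{k+1}` for `k = 0,…,T−1`, where
`G(θ) := (ΦᵀDΦ)⁻¹ΦᵀD(R + γPΦθ)`, then
`𝔼[‖Φθ_T − Φθ*‖_D] ≤ √(λ_max(ΦᵀDΦ)) · ∑_{k=1}^{T} γ^{T−k}√(ε_k)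
  + γ^T 𝔼[‖Φθ_0 − Φθ*‖_D]`,
where `θ* := −(ΦᵀD(γP − I)Φ)⁻¹ΦᵀDR`. -/
theorem periodic_TD_expected_error_bound
    (N n : ℕ) (hN : 0 < N) (hn : 0 < n) (hnN : n ≤ N)
    (P : Matrix (Fin N) (Fin N) ℝ) (d : Fin N → ℝ) (γ : ℝ)
    (Φ : Matrix (Fin N) (Fin n) ℝ) (R : Fin N → ℝ)
    (hPnonneg : ∀ i j, 0 ≤ P i j)
    (hProw : ∀ i, ∑ j, P i j = 1)
    (hdpos : ∀ s, 0 < d s)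
    (hdsum : ∑ s, d s = 1)
    (hstat : Matrix.vecMul d P = d)
    (hγ0 : 0 < γ) (hγ1 : γ < 1)
    (hΦ : Φ.rank = n)
    (hHerm : (Φᵀ * Matrix.diagonal d * Φ).IsHermitian)
    {Ω : Type*} [MeasurableSpace Ω] (Pr : Measure Ω) [IsProbabilityMeasure Pr]
    (T : ℕ) (hT : 0 < T)
    (ε : ℕ → ℝ) (hε : ∀ k, 1 ≤ k → k ≤ T → 0 ≤ ε k)
    (θ : ℕ → Ω → Fin n → ℝ)
    (hL2 : ∀ k ≤ T, ∀ i, MemLp (fun ω => θ k ω i) 2 Pr)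
    (hrec : ∀ k < T,
      (∫ ω, (∑ i, (θ (k + 1) ω i -
        ((Φᵀ * Matrix.diagonal d * Φ)⁻¹.mulVec
          ((Φᵀ * Matrix.diagonal d).mulVec
            (R + γ • P.mulVec (Φ.mulVec (θ k ω))))) i) ^ 2) ∂Pr) ≤ ε (k + 1)) :
    let D : Matrix (Fin N) (Fin N) ℝ := Matrix.diagonal d
    let normD : (Fin N → ℝ) → ℝ := fun v => Real.sqrt (v ⬝ᵥ D.mulVec v)
    let θstar : Fin n → ℝ :=
      -((Φᵀ * D * (γ • P - 1) * Φ)⁻¹.mulVec ((Φᵀ * D).mulVec R))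
    (∫ ω, normD (Φ.mulVec (θ T ω) - Φ.mulVec θstar) ∂Pr) ≤
      Real.sqrt (⨆ i, hHerm.eigenvalues i) *
        (∑ k ∈ Finset.Icc 1 T, γ ^ (T - k) * Real.sqrt (ε k)) +
      γ ^ T * (∫ ω, normD (Φ.mulVec (θ 0 ω) - Φ.mulVec θstar) ∂Pr) :=
  periodic_TD_expected_error_bound_general N n P d γ Φ R hPnonneg hProw hdpos hstat hγ0 hγ1 hΦ hHerm
    Pr T ε θ hL2 hrec
end
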